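/- arXiv:2207.14480 — 4 statements merged into one kernel-verified Lean document; each statement's English description precedes it below -/
import Mathlib

section
/- For F(t) = cos(t) + |t| on ℝ, there exists no function φ : ℝ → [0,∞) such that the derivative of F is a φ-relative subgradient wherever F is differentiable; i.e., for every φ ≥ 0 there exist s and t (t ≠ 0) with F(t) + F'(t)(s−t) > F(s) + φ(s). -/
/-- for `F(t) = cos t + |t|` no bound `φ ≥ 0` makes the derivative
of `F` a `φ`-relative subgradient wherever `F` is differentiable. -/
theorem cos_abs_not_relatively_subdifferentiable :
    ∀ φ : ℝ → ℝ, (∀ s, 0 ≤ φ s) →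
      ∃ s t : ℝ, t ≠ 0 ∧
        (Real.cos t + |t|) + (-Real.sin t + Real.sign t) * (s - t) >
          (Real.cos s + |s|) + φ s := by
  intro φ hφ
  obtain ⟨n, hn⟩ : ∃ n : ℕ, φ 0 ≤ n := ⟨⌈φ 0⌉₊, Nat.le_ceil _⟩
  set t : ℝ := Real.pi / 2 + (n : ℤ) * (2 * Real.pi) with ht
  have hpi := Real.pi_gt_three
  have hn0 : (0:ℝ) ≤ ((n : ℤ) : ℝ) := by positivity
  have hkey : 1 + φ 0 < t := by
    rw [ht]; push_cast
    nlinarith [mul_nonneg hn0 (by linarith : (0:ℝ) ≤ 2 * Real.pi - 1)]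
  have htpos : 0 < t := by
    have h0 : 0 ≤ φ 0 := hφ 0
    linarith
  refine ⟨0, t, ne_of_gt htpos, ?_⟩
  have hsin : Real.sin t = 1 := by
    rw [ht, Real.sin_add_int_mul_two_pi, Real.sin_pi_div_two]
  have hcos : Real.cos t = 0 := by
    rw [ht, Real.cos_add_int_mul_two_pi, Real.cos_pi_div_two]
  have hsign : Real.sign t = 1 := Real.sign_of_pos htpos
  have habs : |t| = t := abs_of_pos htpos
  rw [hsin, hcos, hsign, habs]
  norm_num
  linarith
end

section
/- Convergence of critical point regularization: Under Condition (C1)–(C6), let y ∈ Y admit an 𝒮-solution (i.e. some u with 𝒮(u,y)=0), yₖ with 𝒟(yₖ,y) ≤ δₖ → 0, and αₖ = α(δₖ) with αₖ → 0 and δₖ^p/αₖ → 0. Suppose zₖ ∈ ∂_{αₖφ}(𝒮(·,yₖ)+αₖℛ)(xₖ) with ‖zₖ‖/αₖ → 0 and ⟨zₖ,xₖ⟩ ≤ 0. Then (xₖ) has a weakly convergent subsequence and every weak cluster point x⁺ is an 𝒮-solution of y satisfying ℛ(x⁺) ≤ ℛ(u) + φ(u) for every 𝒮-solution u of y. -/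
/-!
Testing the relative subgradient inequality at an `𝒮`-solution `u` and using `⟨z_k, x_k⟩ ≤ 0`
and (C5) gives `𝒮(x_k, y_k) + α_k ℛ(x_k) ≤ C δ_k^p + α_k (ℛ(u) + φ(u)) + ‖z_k‖ ‖u‖`. The right
side tends to `0`, so `𝒮(x_k, y) → 0` by (C5) again, and after division by `α_k` it tends to
`ℛ(u) + φ(u)`. Coercivity makes `(x_k)` bounded, and a bounded sequence in a reflexive space has a
weakly convergent subsequence: its closed span `W` is separable and reflexive, so `W**` and hence
`W*` are separable, and sequential Banach–Alaoglu applies in `W**`. Weak lower semicontinuity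
passes both bounds to every weak cluster point.
-/

open Filter Topology NormedSpace TopologicalSpace Function

section Reflexive

variable {𝕜 E : Type*} [RCLike 𝕜] [NormedAddCommGroup E] [NormedSpace 𝕜 E]

theorem Submodule.exists_dual_eq_zero_of_notMem (M : Submodule 𝕜 E) [IsClosed (M : Set E)]
    {v : E} (hv : v ∉ M) : ∃ g : StrongDual 𝕜 E, (∀ a ∈ M, g a = 0) ∧ g v ≠ 0 := by
  obtain ⟨f, hf⟩ := SeparatingDual.exists_ne_zero (R := 𝕜) (x := M.mkQ v)
    (by simpa [Submodule.Quotient.mk_eq_zero] using hv)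
  exact ⟨f.comp M.mkQL, fun a ha => by simp [(Submodule.Quotient.mk_eq_zero M).mpr ha], hf⟩

theorem surjective_inclusionInDoubleDual_of_isClosed
    (hrefl : Surjective (inclusionInDoubleDual 𝕜 E))
    (W : Submodule 𝕜 E) [IsClosed (W : Set E)] :
    Surjective (inclusionInDoubleDual 𝕜 W) := by
  intro Λ
  set restrict : StrongDual 𝕜 E →L[𝕜] StrongDual 𝕜 W :=
    ContinuousLinearMap.precomp 𝕜 W.subtypeL
  obtain ⟨v, hv⟩ := hrefl (Λ.comp restrict)
  have hΛ : ∀ f : StrongDual 𝕜 E, f v = Λ (restrict f) := fun f => by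
    rw [← dual_def 𝕜 E v f, hv]; rfl
  have hvW : v ∈ W := by
    by_contra hvW
    obtain ⟨g, hgW, hgv⟩ := W.exists_dual_eq_zero_of_notMem hvW
    have : restrict g = 0 := by ext a; simpa [restrict] using hgW a a.2
    exact hgv (by rw [hΛ, this, map_zero])
  refine ⟨⟨v, hvW⟩, ContinuousLinearMap.ext fun φ => ?_⟩
  obtain ⟨G, hG, -⟩ := exists_extension_norm_eq W φ
  have hres : restrict G = φ := by ext a; simp [restrict, hG a]
  rw [dual_def, ← hres, ← hΛ]
  simp [restrict]

theorem separableSpace_of_separableSpace_dual [SeparableSpace (StrongDual 𝕜 E)] :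
    SeparableSpace E := by
  set Λ : ℕ → StrongDual 𝕜 E := denseSeq (StrongDual 𝕜 E)
  have hv : ∀ n, ∃ v : E, ‖v‖ ≤ 1 ∧ ‖Λ n‖ / 2 ≤ ‖Λ n v‖ := by
    intro n
    rcases eq_or_ne (Λ n) 0 with h0 | h0
    · exact ⟨0, by simp, by simp [h0]⟩
    · obtain ⟨v, hv1, hv2⟩ := (Λ n).exists_lt_apply_of_lt_opNorm (r := ‖Λ n‖ / 2)
        (by linarith [norm_pos_iff.mpr h0])
      exact ⟨v, hv1.le, hv2.le⟩
  choose v hv1 hv2 using hv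
  set M : Submodule 𝕜 E := (Submodule.span 𝕜 (Set.range v)).topologicalClosure
  have : IsClosed (M : Set E) := Submodule.isClosed_topologicalClosure _
  have hfar : ∀ g : StrongDual 𝕜 E, (∀ a ∈ M, g a = 0) → ∀ n, ‖g‖ ≤ 3 * ‖Λ n - g‖ := by
    intro g hg n
    have hvn : g (v n) = 0 :=
      hg _ (Submodule.le_topologicalClosure _ (Submodule.subset_span ⟨n, rfl⟩))
    have : ‖Λ n‖ / 2 ≤ ‖Λ n - g‖ := calc
      ‖Λ n‖ / 2 ≤ ‖(Λ n - g) (v n)‖ := by simpa [hvn] using hv2 n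
      _ ≤ ‖Λ n - g‖ * ‖v n‖ := (Λ n - g).le_opNorm _
      _ ≤ ‖Λ n - g‖ := mul_le_of_le_one_right (norm_nonneg _) (hv1 n)
    linarith [norm_le_norm_add_norm_sub' g (Λ n), norm_sub_rev g (Λ n)]
  have hMtop : M = ⊤ := by
    refine (Submodule.eq_top_iff'.mpr fun w => ?_)
    by_contra hw
    obtain ⟨g, hgM, hgw⟩ := M.exists_dual_eq_zero_of_notMem hw
    have hg : ‖g‖ = 0 := by
      refine le_antisymm (le_of_forall_pos_lt_add fun ε hε => ?_) (norm_nonneg g)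
      obtain ⟨n, hn⟩ := Metric.denseRange_iff.mp (denseRange_denseSeq _) g (ε / 3) (by positivity)
      rw [dist_comm, dist_eq_norm] at hn
      linarith [hfar g hgM n]
    exact hgw (by simp [norm_eq_zero.mp hg])
  have hsep : IsSeparable (M : Set E) := (Set.countable_range v).isSeparable.span.closure
  rw [hMtop, Submodule.top_coe] at hsep
  exact isSeparable_univ_iff.mp hsep

theorem exists_subseq_weak_tendsto_of_bounded (hrefl : Surjective (inclusionInDoubleDual 𝕜 E))
    (x : ℕ → E) {B : ℝ} (hB : ∀ k, ‖x k‖ ≤ B) :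
    ∃ (σ : ℕ → ℕ) (xp : E), StrictMono σ ∧
      ∀ f : StrongDual 𝕜 E, Tendsto (fun k => f (x (σ k))) atTop (𝓝 (f xp)) := by
  set W : Submodule 𝕜 E := (Submodule.span 𝕜 (Set.range x)).topologicalClosure
  have : IsClosed (W : Set E) := Submodule.isClosed_topologicalClosure _
  have hxW : ∀ k, x k ∈ W := fun k =>
    Submodule.le_topologicalClosure _ (Submodule.subset_span ⟨k, rfl⟩)
  have hreflW := surjective_inclusionInDoubleDual_of_isClosed hrefl W
  have : SeparableSpace W :=
    (Set.countable_range x).isSeparable.span.closure.separableSpace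
  have : SeparableSpace (StrongDual 𝕜 (StrongDual 𝕜 W)) :=
    hreflW.denseRange.separableSpace (inclusionInDoubleDual 𝕜 W).continuous
  have : SeparableSpace (StrongDual 𝕜 W) := separableSpace_of_separableSpace_dual (𝕜 := 𝕜)
  set a : ℕ → WeakDual 𝕜 (StrongDual 𝕜 W) := fun k =>
    StrongDual.toWeakDual (inclusionInDoubleDual 𝕜 W ⟨x k, hxW k⟩)
  have ha : ∀ k, a k ∈ WeakDual.toStrongDual ⁻¹' Metric.closedBall 0 B := fun k =>
    (mem_closedBall_zero_iff (E := StrongDual 𝕜 (StrongDual 𝕜 W))).mpr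
      ((double_dual_bound 𝕜 W _).trans (hB k))
  obtain ⟨Λ, -, σ, hσ, hlim⟩ := WeakDual.isSeqCompact_closedBall 𝕜 _ 0 B ha
  obtain ⟨w, hw⟩ := hreflW (WeakDual.toStrongDual Λ)
  refine ⟨σ, w, hσ, fun f => ?_⟩
  have := ((WeakDual.eval_continuous (f.comp W.subtypeL)).tendsto Λ).comp hlim
  have hΛ : Λ (f.comp W.subtypeL) = f w := by
    change WeakDual.toStrongDual Λ _ = _
    rw [← hw]; rfl
  rwa [hΛ] at this

end Reflexive

section Limits

variable {ι : Type*} {l : Filter ι}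

theorem tendsto_zero_of_tendsto_div {a b : ι → ℝ} {c : ℝ} (hb : ∀ i, b i ≠ 0)
    (hab : Tendsto (fun i => a i / b i) l (𝓝 0)) (hbc : Tendsto b l (𝓝 c)) :
    Tendsto a l (𝓝 0) := by
  simpa [div_mul_cancel₀ _ (hb _)] using hab.mul hbc

theorem le_of_le_liminf_of_tendsto [l.NeBot] {a b : ι → ℝ} {c L : ℝ}
    (ha : IsBoundedUnder (· ≥ ·) l a) (hab : ∀ i, a i ≤ b i) (hb : Tendsto b l (𝓝 L))
    (hc : c ≤ liminf a l) : c ≤ L := by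
  calc c ≤ liminf a l := hc
    _ ≤ liminf b l := liminf_le_liminf (.of_forall hab) ha hb.isBoundedUnder_le.isCoboundedUnder_ge
    _ = L := hb.liminf_eq

theorem exists_norm_le_of_coercive {E : Type*} [Norm E] {T : E → ℝ}
    (hT : ∀ M, ∃ ρ, ∀ x, ρ ≤ ‖x‖ → M ≤ T x) {x : ℕ → E} {b : ℕ → ℝ}
    (hxb : ∀ k, T (x k) ≤ b k) (hb : BddAbove (Set.range b)) :
    ∃ B, ∀ k, ‖x k‖ ≤ B := by
  obtain ⟨M, hM⟩ := hb
  obtain ⟨ρ, hρ⟩ := hT (M + 1)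
  refine ⟨ρ, fun k => le_of_not_ge fun hk => ?_⟩
  linarith [hρ (x k) hk, hxb k, hM ⟨k, rfl⟩]

end Limits

theorem le_of_comparison_of_dist_le {X Y : Type*} [PseudoMetricSpace Y] {S : X → Y → ℝ}
    {C p : ℝ} (hC : 0 ≤ C) (hp : 0 ≤ p)
    (hcomp : ∀ w y y', S w y ≤ C * (S w y' + dist y y' ^ p)) {w : X} {y y' : Y} {δ : ℝ}
    (hd : dist y y' ≤ δ) : S w y ≤ C * (S w y' + δ ^ p) := by
  calc S w y ≤ C * (S w y' + dist y y' ^ p) := hcomp w y y'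
    _ ≤ C * (S w y' + δ ^ p) := by gcongr

section Regularization

variable {X Y : Type*} [NormedAddCommGroup X] [NormedSpace ℝ X] [MetricSpace Y]

/-- The `ψ`-relative subdifferential `∂_ψ G(x)`. -/
def relSubdifferential (G ψ : X → ℝ) (x : X) : Set (StrongDual ℝ X) :=
  {r | ∀ u, G x + r (u - x) ≤ G u + ψ u}

theorem le_add_norm_mul_norm_of_mem_relSubdifferential {G ψ : X → ℝ} {x : X}
    {r : StrongDual ℝ X} (hr : r ∈ relSubdifferential G ψ x) (hrx : r x ≤ 0) (u : X) :
    G x ≤ G u + ψ u + ‖r‖ * ‖u‖ := by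
  have hru : -(‖r‖ * ‖u‖) ≤ r u := by
    have := r.le_opNorm u
    rw [Real.norm_eq_abs] at this
    exact neg_le_of_abs_le this
  have := hr u
  rw [map_sub] at this
  linarith

variable {S : X → Y → ℝ} {C p : ℝ}

theorem exists_tendsto_bounds_of_mem_relSubdifferential {Rg φ : X → ℝ}
    (hSnn : ∀ x y, 0 ≤ S x y) (hRnn : ∀ x, 0 ≤ Rg x) (hC : 0 ≤ C) (hp : 0 ≤ p)
    (hcomp : ∀ w y y', S w y ≤ C * (S w y' + dist y y' ^ p)) {y : Y} {u : X} (hu : S u y = 0)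
    {δ α : ℕ → ℝ} {yk : ℕ → Y} (hyk : ∀ k, dist (yk k) y ≤ δ k) (hαpos : ∀ k, 0 < α k)
    (hα : Tendsto α atTop (𝓝 0)) (hδα : Tendsto (fun k => δ k ^ p / α k) atTop (𝓝 0))
    {x : ℕ → X} {z : ℕ → StrongDual ℝ X}
    (hz : ∀ k, z k ∈ relSubdifferential (fun w => S w (yk k) + α k * Rg w)
      (fun w => α k * φ w) (x k))
    (hznorm : Tendsto (fun k => ‖z k‖ / α k) atTop (𝓝 0)) (hzx : ∀ k, z k (x k) ≤ 0) :
    ∃ s r : ℕ → ℝ, Tendsto s atTop (𝓝 0) ∧ Tendsto r atTop (𝓝 (Rg u + φ u)) ∧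
      ∀ k, S (x k) y ≤ s k ∧ Rg (x k) ≤ r k := by
  have hαne : ∀ k, α k ≠ 0 := fun k => (hαpos k).ne'
  have hδp := tendsto_zero_of_tendsto_div hαne hδα hα
  have hzn := tendsto_zero_of_tendsto_div hαne hznorm hα
  set e : ℕ → ℝ := fun k => C * δ k ^ p + α k * (Rg u + φ u) + ‖z k‖ * ‖u‖
  have he : ∀ k, S (x k) (yk k) + α k * Rg (x k) ≤ e k := fun k => by
    have hcrit := le_add_norm_mul_norm_of_mem_relSubdifferential (hz k) (hzx k) u
    have hSu : S u (yk k) ≤ C * (S u y + δ k ^ p) :=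
      le_of_comparison_of_dist_le hC hp hcomp (hyk k)
    rw [hu, zero_add] at hSu
    simp only [e]
    linarith
  refine ⟨fun k => C * (e k + δ k ^ p), fun k => e k / α k, ?_, ?_, fun k => ⟨?_, ?_⟩⟩
  · simpa using
      ((((hδp.const_mul C).add (hα.mul_const _)).add (hzn.mul_const ‖u‖)).add hδp).const_mul C
  · have : Tendsto (fun k => C * (δ k ^ p / α k) + (Rg u + φ u) + ‖z k‖ / α k * ‖u‖) atTop
        (𝓝 (Rg u + φ u)) := by
      simpa using ((hδα.const_mul C).add_const (Rg u + φ u)).add (hznorm.mul_const ‖u‖)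
    refine this.congr fun k => ?_
    simp only [e]
    field_simp [hαne k]
  · calc S (x k) y ≤ C * (S (x k) (yk k) + δ k ^ p) :=
          le_of_comparison_of_dist_le hC hp hcomp ((dist_comm _ _).trans_le (hyk k))
      _ ≤ C * (e k + δ k ^ p) := by gcongr; linarith [he k, mul_nonneg (hαpos k).le (hRnn (x k))]
  · rw [le_div_iff₀' (hαpos k)]
    linarith [he k, hSnn (x k) (yk k)]

end Regularization

theorem critical_point_convergence_general
    {X : Type*} [NormedAddCommGroup X] [NormedSpace ℝ X]
    -- X is reflexive
    (hrefl : Function.Surjective (NormedSpace.inclusionInDoubleDual ℝ X))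
    {Y : Type*} [MetricSpace Y]
    (S : X → Y → ℝ) (Rg : X → ℝ) (φ : X → ℝ)
    (hSnn : ∀ x y, 0 ≤ S x y) (hRnn : ∀ x, 0 ≤ Rg x)
    -- S and R weakly sequentially lower semi-continuous
    (hSlsc : ∀ (w : ℕ → X) (wlim : X) (y : Y),
      (∀ f : X →L[ℝ] ℝ, Tendsto (fun k => f (w k)) atTop (nhds (f wlim))) →
      S wlim y ≤ liminf (fun k => S (w k) y) atTop)
    (hRlsc : ∀ (w : ℕ → X) (wlim : X),
      (∀ f : X →L[ℝ] ℝ, Tendsto (fun k => f (w k)) atTop (nhds (f wlim))) →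
      Rg wlim ≤ liminf (fun k => Rg (w k)) atTop)
    -- the comparison condition (C5)
    (C : ℝ) (hC : 0 < C) (p : ℝ) (hp : 1 ≤ p)
    (hcomp : ∀ (z : X) (y y' : Y), S z y ≤ C * (S z y' + dist y y' ^ p))
    -- coercivity of the Tikhonov functional
    (hcoer : ∀ (α : ℝ), 0 < α → ∀ y : Y, ∀ M : ℝ, ∃ ρ : ℝ, ∀ x : X,
      ρ ≤ ‖x‖ → M ≤ S x y + α * Rg x)
    -- exact data with an S-solution
    (y : Y) (hsol : ∃ u, S u y = 0)
    -- noisy data and parameter choice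
    (δ : ℕ → ℝ)
    (yk : ℕ → Y) (hyk : ∀ k, dist (yk k) y ≤ δ k)
    (α : ℕ → ℝ) (hαpos : ∀ k, 0 < α k) (hα : Tendsto α atTop (nhds 0))
    (hδα : Tendsto (fun k => δ k ^ p / α k) atTop (nhds 0))
    -- inexact critical points
    (x : ℕ → X) (z : ℕ → X →L[ℝ] ℝ)
    (hz : ∀ k, ∀ u, (S (x k) (yk k) + α k * Rg (x k)) + z k (u - x k) ≤
      (S u (yk k) + α k * Rg u) + α k * φ u)
    (hznorm : Tendsto (fun k => ‖z k‖ / α k) atTop (nhds 0))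
    (hzx : ∀ k, z k (x k) ≤ 0) :
    (∃ (σ : ℕ → ℕ) (xp : X), StrictMono σ ∧
        ∀ f : X →L[ℝ] ℝ, Tendsto (fun k => f (x (σ k))) atTop (nhds (f xp))) ∧
      (∀ (σ : ℕ → ℕ) (xp : X), StrictMono σ →
        (∀ f : X →L[ℝ] ℝ, Tendsto (fun k => f (x (σ k))) atTop (nhds (f xp))) →
        S xp y = 0 ∧ ∀ u, S u y = 0 → Rg xp ≤ Rg u + φ u) := by
  have hbounds : ∀ u, S u y = 0 → ∃ s r : ℕ → ℝ, Tendsto s atTop (𝓝 0) ∧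
      Tendsto r atTop (𝓝 (Rg u + φ u)) ∧ ∀ k, S (x k) y ≤ s k ∧ Rg (x k) ≤ r k :=
    fun u hu => exists_tendsto_bounds_of_mem_relSubdifferential hSnn hRnn hC.le
      (zero_le_one.trans hp) hcomp hu hyk hαpos hα hδα hz hznorm hzx
  obtain ⟨u₀, hu₀⟩ := hsol
  obtain ⟨s, r, hs, hr, hsr⟩ := hbounds u₀ hu₀
  obtain ⟨B, hB⟩ := exists_norm_le_of_coercive (hcoer 1 one_pos y) (x := x)
    (b := s + r) (fun k => by simp only [Pi.add_apply, one_mul]; linarith [hsr k])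
    (hs.add hr).bddAbove_range
  refine ⟨exists_subseq_weak_tendsto_of_bounded hrefl x hB, fun σ xp hσ hxp => ?_⟩
  have hσ' := hσ.tendsto_atTop
  have hS : S xp y = 0 := le_antisymm
    (le_of_le_liminf_of_tendsto (isBoundedUnder_of ⟨0, fun k => hSnn _ y⟩)
      (fun k => (hsr (σ k)).1) (hs.comp hσ') (hSlsc _ xp y hxp)) (hSnn xp y)
  refine ⟨hS, fun u hu => ?_⟩
  obtain ⟨_, r', -, hr', hsr'⟩ := hbounds u hu
  exact le_of_le_liminf_of_tendsto (isBoundedUnder_of ⟨0, fun k => hRnn _⟩)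
    (fun k => (hsr' (σ k)).2) (hr'.comp hσ') (hRlsc _ xp hxp)

/-- convergence of critical point regularization as the noise
level tends to zero. -/
theorem critical_point_convergence
    {X : Type*} [NormedAddCommGroup X] [NormedSpace ℝ X] [CompleteSpace X]
    -- X is reflexive
    (hrefl : Function.Surjective (NormedSpace.inclusionInDoubleDual ℝ X))
    {Y : Type*} [MetricSpace Y]
    (S : X → Y → ℝ) (Rg : X → ℝ) (φ : X → ℝ)
    (hSnn : ∀ x y, 0 ≤ S x y) (hRnn : ∀ x, 0 ≤ Rg x) (hφ : ∀ u, 0 ≤ φ u)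
    -- S and R weakly sequentially lower semi-continuous
    (hSlsc : ∀ (w : ℕ → X) (wlim : X) (y : Y),
      (∀ f : X →L[ℝ] ℝ, Tendsto (fun k => f (w k)) atTop (nhds (f wlim))) →
      S wlim y ≤ liminf (fun k => S (w k) y) atTop)
    (hRlsc : ∀ (w : ℕ → X) (wlim : X),
      (∀ f : X →L[ℝ] ℝ, Tendsto (fun k => f (w k)) atTop (nhds (f wlim))) →
      Rg wlim ≤ liminf (fun k => Rg (w k)) atTop)
    -- S convex in its first argument and continuous in its second argument
    (hSconv : ∀ y : Y, ConvexOn ℝ Set.univ (fun x => S x y))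
    (hScont : ∀ x : X, Continuous (S x))
    -- the comparison condition (C5)
    (C : ℝ) (hC : 0 < C) (p : ℝ) (hp : 1 ≤ p)
    (hcomp : ∀ (z : X) (y y' : Y), S z y ≤ C * (S z y' + dist y y' ^ p))
    -- coercivity of the Tikhonov functional
    (hcoer : ∀ (α : ℝ), 0 < α → ∀ y : Y, ∀ M : ℝ, ∃ ρ : ℝ, ∀ x : X,
      ρ ≤ ‖x‖ → M ≤ S x y + α * Rg x)
    -- exact data with an S-solution
    (y : Y) (hsol : ∃ u, S u y = 0)
    -- noisy data and parameter choice
    (δ : ℕ → ℝ) (hδpos : ∀ k, 0 < δ k) (hδ : Tendsto δ atTop (nhds 0))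
    (yk : ℕ → Y) (hyk : ∀ k, dist (yk k) y ≤ δ k)
    (α : ℕ → ℝ) (hαpos : ∀ k, 0 < α k) (hα : Tendsto α atTop (nhds 0))
    (hδα : Tendsto (fun k => δ k ^ p / α k) atTop (nhds 0))
    -- inexact critical points
    (x : ℕ → X) (z : ℕ → X →L[ℝ] ℝ)
    (hz : ∀ k, ∀ u, (S (x k) (yk k) + α k * Rg (x k)) + z k (u - x k) ≤
      (S u (yk k) + α k * Rg u) + α k * φ u)
    (hznorm : Tendsto (fun k => ‖z k‖ / α k) atTop (nhds 0))
    (hzx : ∀ k, z k (x k) ≤ 0) :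
    (∃ (σ : ℕ → ℕ) (xp : X), StrictMono σ ∧
        ∀ f : X →L[ℝ] ℝ, Tendsto (fun k => f (x (σ k))) atTop (nhds (f xp))) ∧
      (∀ (σ : ℕ → ℕ) (xp : X), StrictMono σ →
        (∀ f : X →L[ℝ] ℝ, Tendsto (fun k => f (x (σ k))) atTop (nhds (f xp))) →
        S xp y = 0 ∧ ∀ u, S u y = 0 → Rg xp ≤ Rg u + φ u) :=
  critical_point_convergence_general hrefl S Rg φ hSnn hRnn hSlsc hRlsc C hC p hp hcomp hcoer y hsol
    δ yk hyk α hαpos hα hδα x z hz hznorm hzx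
end

section
/- Normality property: in the setting of the convergence theorem, if additionally zₖ = sₖ + αₖ rₖ with sₖ ∈ ∂₀𝒮(·,yₖ)(xₖ) (convex subgradient) and rₖ ∈ ∂_φℛ(xₖ), then any strong cluster point r of (rₖ) satisfies r ∈ ∂_φℛ(x⁺) and ⟨−r, u − x⁺⟩ ≤ 0 for every u with 𝒮(u,y) = 0; i.e., −r lies in the normal cone of the set of 𝒮-solutions of y at x⁺. -/
open Filter

/-- normality property of the limit of critical point
regularization: a strong cluster point `r` of the regularizer subgradients
belongs to `∂_φ ℛ(x⁺)` and `-r` lies in the normal cone of the set of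
`𝒮`-solutions at `x⁺`. -/
theorem critical_point_normality
    {X : Type*} [NormedAddCommGroup X] [NormedSpace ℝ X] [CompleteSpace X]
    {Y : Type*} [MetricSpace Y]
    (S : X → Y → ℝ) (Rg : X → ℝ) (φ : X → ℝ)
    (hSnn : ∀ x y, 0 ≤ S x y) (hRnn : ∀ x, 0 ≤ Rg x) (hφ : ∀ u, 0 ≤ φ u)
    -- S convex in its first argument and weakly l.s.c., R weakly l.s.c.
    (hSconv : ∀ y : Y, ConvexOn ℝ Set.univ (fun x => S x y))
    (hSlsc : ∀ (w : ℕ → X) (wlim : X) (y : Y),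
      (∀ f : X →L[ℝ] ℝ, Tendsto (fun k => f (w k)) atTop (nhds (f wlim))) →
      S wlim y ≤ liminf (fun k => S (w k) y) atTop)
    (hRlsc : ∀ (w : ℕ → X) (wlim : X),
      (∀ f : X →L[ℝ] ℝ, Tendsto (fun k => f (w k)) atTop (nhds (f wlim))) →
      Rg wlim ≤ liminf (fun k => Rg (w k)) atTop)
    -- comparison condition
    (C : ℝ) (hC : 0 < C) (p : ℝ) (hp : 1 ≤ p)
    (hcomp : ∀ (z : X) (y y' : Y), S z y ≤ C * (S z y' + dist y y' ^ p))
    -- data, noise level and parameter choice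
    (y : Y) (δ : ℕ → ℝ) (hδpos : ∀ k, 0 < δ k) (hδ : Tendsto δ atTop (nhds 0))
    (yk : ℕ → Y) (hyk : ∀ k, dist (yk k) y ≤ δ k)
    (α : ℕ → ℝ) (hαpos : ∀ k, 0 < α k) (hα : Tendsto α atTop (nhds 0))
    (hδα : Tendsto (fun k => δ k ^ p / α k) atTop (nhds 0))
    -- inexact critical points with separable gradients
    (x : ℕ → X) (z s r : ℕ → X →L[ℝ] ℝ)
    (hsep : ∀ k, z k = s k + α k • r k)
    (hs : ∀ k, ∀ u, S (x k) (yk k) + s k (u - x k) ≤ S u (yk k))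
    (hr : ∀ k, ∀ u, Rg (x k) + r k (u - x k) ≤ Rg u + φ u)
    (hznorm : Tendsto (fun k => ‖z k‖ / α k) atTop (nhds 0))
    (hzx : ∀ k, z k (x k) ≤ 0)
    -- the (sub)sequence converges weakly to an S-solution x⁺
    (xp : X)
    (hweak : ∀ f : X →L[ℝ] ℝ, Tendsto (fun k => f (x k)) atTop (nhds (f xp)))
    (hxp : S xp y = 0)
    -- a strong cluster point of the sequence (rₖ)
    (rlim : X →L[ℝ] ℝ) (hcluster : MapClusterPt rlim atTop r) :
    (∀ u, Rg xp + rlim (u - xp) ≤ Rg u + φ u) ∧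
      (∀ u, S u y = 0 → (-rlim) (u - xp) ≤ 0) := by
  -- extract a norm-convergent subsequence of (r k)
  obtain ⟨ψ, hψmono, hψtend⟩ :=
    TopologicalSpace.FirstCountableTopology.tendsto_subseq hcluster
  -- the sequence (x k) is bounded (Banach–Steinhaus)
  obtain ⟨M, hM⟩ : ∃ M : ℝ, ∀ k, ‖x k‖ ≤ M := by
    obtain ⟨M, hM⟩ := banach_steinhaus
      (g := fun k => NormedSpace.inclusionInDoubleDual ℝ X (x k)) (fun f => by
        obtain ⟨b, hb⟩ := ((hweak f).norm).bddAbove_range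
        exact ⟨b, fun k => hb ⟨k, rfl⟩⟩)
    refine ⟨M, fun k => ?_⟩
    have h1 : ‖NormedSpace.inclusionInDoubleDual ℝ X (x k)‖ = ‖x k‖ :=
      (NormedSpace.inclusionInDoubleDualLi ℝ).norm_map (x k)
    rw [← h1]; exact hM k
  have hψat : Tendsto ψ atTop atTop := hψmono.tendsto_atTop
  -- the key limit computation
  have hglim : ∀ u : X,
      Tendsto (fun j => (r (ψ j)) (u - x (ψ j))) atTop (nhds (rlim (u - xp))) := by
    intro u
    have hnorm0 : Tendsto (fun j => ‖r (ψ j) - rlim‖) atTop (nhds 0) := by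
      have := (tendsto_iff_norm_sub_tendsto_zero).mp hψtend
      simpa using this
    have hA : Tendsto (fun j => (r (ψ j) - rlim) (u - x (ψ j))) atTop (nhds 0) := by
      have hb : ∀ j, ‖(r (ψ j) - rlim) (u - x (ψ j))‖ ≤ ‖r (ψ j) - rlim‖ * (‖u‖ + M) := by
        intro j
        calc ‖(r (ψ j) - rlim) (u - x (ψ j))‖
            ≤ ‖r (ψ j) - rlim‖ * ‖u - x (ψ j)‖ := (r (ψ j) - rlim).le_opNorm _
          _ ≤ ‖r (ψ j) - rlim‖ * (‖u‖ + M) := by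
              have h1 : ‖u - x (ψ j)‖ ≤ ‖u‖ + ‖x (ψ j)‖ := norm_sub_le _ _
              have h2 := hM (ψ j)
              have h3 : (0:ℝ) ≤ ‖r (ψ j) - rlim‖ := norm_nonneg _
              nlinarith
      have hbt : Tendsto (fun j => ‖r (ψ j) - rlim‖ * (‖u‖ + M)) atTop (nhds 0) := by
        have := hnorm0.mul_const (‖u‖ + M); simpa using this
      exact squeeze_zero_norm hb hbt
    have hB : Tendsto (fun j => rlim (x (ψ j))) atTop (nhds (rlim xp)) :=
      (hweak rlim).comp hψat
    have h2 : Tendsto (fun j => (r (ψ j) - rlim) (u - x (ψ j))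
        + (rlim u - rlim (x (ψ j)))) atTop (nhds (0 + (rlim u - rlim xp))) :=
      hA.add (tendsto_const_nhds.sub hB)
    have heq : (fun j => (r (ψ j) - rlim) (u - x (ψ j)) + (rlim u - rlim (x (ψ j))))
        = fun j => (r (ψ j)) (u - x (ψ j)) := by
      funext j
      simp only [ContinuousLinearMap.sub_apply, map_sub]
      ring
    rw [heq] at h2
    have : (0:ℝ) + (rlim u - rlim xp) = rlim (u - xp) := by simp [map_sub]
    rwa [this] at h2
  constructor
  · -- r is still a φ-relative subgradient at x⁺
    intro u
    have hweakψ : ∀ f : X →L[ℝ] ℝ,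
        Tendsto (fun j => f (x (ψ j))) atTop (nhds (f xp)) := fun f => (hweak f).comp hψat
    have h1 : Rg xp ≤ liminf (fun j => Rg (x (ψ j))) atTop :=
      hRlsc (fun j => x (ψ j)) xp hweakψ
    have h3 : Tendsto (fun j => Rg u + φ u - (r (ψ j)) (u - x (ψ j))) atTop
        (nhds (Rg u + φ u - rlim (u - xp))) := tendsto_const_nhds.sub (hglim u)
    have h4 : liminf (fun j => Rg (x (ψ j))) atTop ≤ Rg u + φ u - rlim (u - xp) := by
      have h2 : ∀ j, Rg (x (ψ j)) ≤ Rg u + φ u - (r (ψ j)) (u - x (ψ j)) := fun j => by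
        linarith [hr (ψ j) u]
      have hle := liminf_le_liminf (Eventually.of_forall h2)
        (isBoundedUnder_of ⟨0, fun j => hRnn _⟩)
        (h3.isBoundedUnder_le.isCoboundedUnder_ge)
      rwa [h3.liminf_eq] at hle
    linarith
  · -- normal cone property
    intro u hu
    have hlb : ∀ k, -((‖z k‖ / α k) * ‖u‖) - C * (δ k ^ p / α k) ≤ (r k) (u - x k) := by
      intro k
      have hα' := hαpos k
      have hs' := hs k u
      have hsep' : (s k) (u - x k) = (z k) (u - x k) - α k * (r k) (u - x k) := by
        have := congrArg (fun f : X →L[ℝ] ℝ => f (u - x k)) (hsep k)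
        simp only [ContinuousLinearMap.add_apply, ContinuousLinearMap.smul_apply,
          smul_eq_mul] at this
        linarith
      have hSxk := hSnn (x k) (yk k)
      have hSu : S u (yk k) ≤ C * δ k ^ p := by
        have h1 := hcomp u (yk k) y
        rw [hu] at h1
        have h2 : dist (yk k) y ^ p ≤ δ k ^ p :=
          Real.rpow_le_rpow dist_nonneg (hyk k) (by linarith)
        nlinarith
      have hzu : -(‖z k‖ * ‖u‖) ≤ (z k) u := by
        have h1 : ‖(z k) u‖ ≤ ‖z k‖ * ‖u‖ := (z k).le_opNorm u
        rw [Real.norm_eq_abs] at h1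
        linarith [neg_abs_le ((z k) u), abs_nonneg ((z k) u)]
      have hzux : (z k) (u - x k) = (z k) u - (z k) (x k) := map_sub _ _ _
      have key : -(‖z k‖ * ‖u‖) - C * δ k ^ p ≤ α k * (r k) (u - x k) := by
        have hz := hzx k
        linarith
      have hdiv : (-(‖z k‖ * ‖u‖) - C * δ k ^ p) / α k ≤ (r k) (u - x k) := by
        rw [div_le_iff₀ hα']
        linarith [key, mul_comm (α k) ((r k) (u - x k))]
      have heq : -((‖z k‖ / α k) * ‖u‖) - C * (δ k ^ p / α k)
          = (-(‖z k‖ * ‖u‖) - C * δ k ^ p) / α k := by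
        field_simp
      rw [heq]; exact hdiv
    have hlbtend : Tendsto (fun k => -((‖z k‖ / α k) * ‖u‖) - C * (δ k ^ p / α k))
        atTop (nhds 0) := by
      have := ((hznorm.mul_const ‖u‖).neg).sub (hδα.const_mul C)
      simpa using this
    have h0 : (0:ℝ) ≤ rlim (u - xp) :=
      le_of_tendsto_of_tendsto' (hlbtend.comp hψat) (hglim u) (fun j => hlb (ψ j))
    simpa [ContinuousLinearMap.neg_apply] using h0
end

section
/- If f : X → V is quasi-homogeneous with quasi-derivative L_f, and ψ : V → [0,∞) is convex and sub-differentiable with ψ(v) ≤ C‖v‖^p for some C > 0, p ≥ 1, and ψ'(v) ∈ ∂₀ψ(v) is a subgradient selection, then ψ∘f is relatively sub-differentiable: there exists φ : X → [0,∞) such that for all x, u ∈ X, ψ(f(x)) + ⟨ψ'(f(x)) ∘ L_f(x), u − x⟩ ≤ ψ(f(u)) + φ(u). -/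
/-- if `f` is quasi-homogeneous and `ψ` is convex, non-negative,
sub-differentiable with growth `ψ(v) ≤ C‖v‖^p`, then `ψ ∘ f` is relatively
sub-differentiable with subgradients `ψ'(f(x)) ∘ L_f(x)`. -/
theorem quasi_homogeneous_relatively_subdifferentiable
    {X V : Type*}
    [NormedAddCommGroup X] [InnerProductSpace ℝ X] [CompleteSpace X]
    [NormedAddCommGroup V] [InnerProductSpace ℝ V] [CompleteSpace V]
    (f : X → V) (Lf : X → X →L[ℝ] V)
    (hLf_bdd : ∃ M, ∀ x, ‖Lf x‖ ≤ M)
    (hf : ∃ M, ∀ x, ‖f x - Lf x x‖ ≤ M)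
    (ψ : V → ℝ) (hψnn : ∀ v, 0 ≤ ψ v) (hψconv : ConvexOn ℝ Set.univ ψ)
    (C : ℝ) (hC : 0 < C) (p : ℝ) (hp : 1 ≤ p)
    (hgrowth : ∀ v, ψ v ≤ C * ‖v‖ ^ p)
    (ψ' : V → V →L[ℝ] ℝ)
    (hψ' : ∀ v u, ψ v + ψ' v (u - v) ≤ ψ u) :
    ∃ φ : X → ℝ, (∀ u, 0 ≤ φ u) ∧
      ∀ x u, ψ (f x) + ((ψ' (f x)).comp (Lf x)) (u - x) ≤ ψ (f u) + φ u := by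
  obtain ⟨M1, hM1⟩ := hLf_bdd
  obtain ⟨M, hM⟩ := hf
  have hM1nn : 0 ≤ M1 := le_trans (norm_nonneg _) (hM1 0)
  have hMnn : 0 ≤ M := le_trans (norm_nonneg _) (hM 0)
  refine ⟨fun u => C * (M + M1 * ‖u‖) ^ p, ?_, ?_⟩
  · intro u
    have h : 0 ≤ M + M1 * ‖u‖ := by positivity
    positivity
  · intro x u
    have key := hψ' (f x) (f x + Lf x (u - x))
    simp only [add_sub_cancel_left] at key
    have hnorm : ‖f x + Lf x (u - x)‖ ≤ M + M1 * ‖u‖ := by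
      have h1 : f x + Lf x (u - x) = (f x - Lf x x) + Lf x u := by
        rw [map_sub]; abel
      rw [h1]
      calc ‖(f x - Lf x x) + Lf x u‖ ≤ ‖f x - Lf x x‖ + ‖Lf x u‖ := norm_add_le _ _
        _ ≤ M + M1 * ‖u‖ := by
            gcongr
            · exact hM x
            · calc ‖Lf x u‖ ≤ ‖Lf x‖ * ‖u‖ := (Lf x).le_opNorm u
                _ ≤ M1 * ‖u‖ := by gcongr; exact hM1 x
    have hbound : ψ (f x + Lf x (u - x)) ≤ C * (M + M1 * ‖u‖) ^ p := by
      calc ψ (f x + Lf x (u - x)) ≤ C * ‖f x + Lf x (u - x)‖ ^ p := hgrowth _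
        _ ≤ C * (M + M1 * ‖u‖) ^ p := by
            exact mul_le_mul_of_nonneg_left
              (Real.rpow_le_rpow (norm_nonneg _) hnorm (le_trans zero_le_one hp)) hC.le
    calc ψ (f x) + ((ψ' (f x)).comp (Lf x)) (u - x)
        = ψ (f x) + ψ' (f x) (Lf x (u - x)) := rfl
      _ ≤ ψ (f x + Lf x (u - x)) := key
      _ ≤ C * (M + M1 * ‖u‖) ^ p := hbound
      _ ≤ ψ (f u) + C * (M + M1 * ‖u‖) ^ p := le_add_of_nonneg_left (hψnn _)
end
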